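/- arXiv:1711.07956 — 2 statements merged into one kernel-verified Lean document; each statement's English description precedes it below -/
import Mathlib

section
/- For fixed W ∈ (0, 1/2) there exists a constant C (depending only on W) such that for all N ∈ ℕ with 2NW ≥ 2: 0 ≤ 2NW − Σ_{ℓ=0}^{N−1} λ_ℓ(B_{N,W})² ≤ C·log(2NW). (Together with Σ_ℓ λ_ℓ(B_{N,W}) = 2NW, this says Σ_ℓ λ_ℓ(B_{N,W})² = 2NW − O(log(2NW)).) -/
/-!
Since `B_{N,W}` is real symmetric, `∑ λ_ℓ² = ∑_{m,n} B[m,n]²`. The entries are the Fourier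
coefficients `b_k = 2W sinc(2πWk)` of the indicator of `[-W, W]`, and Parseval gives
`∑_{k ∈ ℤ} b_k² = 2W`. Hence row `m` falls short of `2W` exactly by the two tails
`∑_{k > m} b_k²` and `∑_{k ≥ N - m} b_k²`. As `b_k² ≤ 1/(πk)²`, a tail starting at `j` is at most
`2/(π² j)`, so the total deficit is at most a harmonic sum `H_N ≤ 1 + log N`, and
`log N = log(2NW) - log(2W)`.
-/

set_option autoImplicit false

open Real

noncomputable section

/-- The `N × N` prolate matrix `B_{N,W}`, with entries
`B_{N,W}[m,n] = sin(2πW(m−n))/(π(m−n))` for `m ≠ n` and `B_{N,W}[m,m] = 2W`. -/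
def prolateMatrix (N : ℕ) (W : ℝ) : Matrix (Fin N) (Fin N) ℝ :=
  fun m n => if (m : ℕ) = (n : ℕ) then 2 * W
    else Real.sin (2 * π * W * ((m : ℝ) - (n : ℝ))) / (π * ((m : ℝ) - (n : ℝ)))

open Finset Matrix

theorem Matrix.IsHermitian.sum_eigenvalues_sq {𝕜 n : Type*} [RCLike 𝕜] [Fintype n]
    [DecidableEq n] {A : Matrix n n 𝕜} (hA : A.IsHermitian) :
    ∑ i, hA.eigenvalues i ^ 2 = ∑ i, ∑ j, ‖A i j‖ ^ 2 := by
  have hcfc : Aᴴ * A = hA.cfc (· ^ 2) := by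
    rw [hA.eq, ← hA.cfc_eq, cfc_pow_id A 2 hA.isSelfAdjoint, sq]
  have htr := congrArg trace hcfc
  rw [IsHermitian.cfc, Unitary.conjStarAlgAut_apply, trace_mul_cycle, Unitary.coe_star_mul_self,
    Matrix.one_mul, trace_diagonal] at htr
  rw [sum_comm]
  apply RCLike.ofReal_injective (K := 𝕜)
  simpa [trace, mul_apply, RCLike.conj_mul] using htr.symm

theorem Finset.sum_range_comp_natCast_sub {M : Type*} [AddCommMonoid M] (f : ℝ → M) {m N : ℕ}
    (hm : m < N) :
    ∑ n ∈ range N, f (m - n) =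
      ∑ k ∈ range m, f (k + 1) + f 0 + ∑ k ∈ range (N - 1 - m), f (-(k + 1)) := by
  rw [← sum_range_add_sum_Ico _ hm.nat_succ_le, sum_range_succ, sub_self,
    ← sum_range_reflect, sum_Ico_eq_sum_range, Nat.sub_sub, add_comm 1 m]
  congr 2
  · refine sum_congr rfl fun k hk => congrArg f ?_
    rw [Nat.sub_sub, Nat.cast_sub (by rw [mem_range] at hk; omega)]
    push_cast
    ring
  · funext k
    push_cast
    ring_nf

/-- The Fourier coefficients `∫_{-W}^{W} e^{2πixξ} dξ` of the indicator of `[-W, W]`. -/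
def prolateCoeff (W x : ℝ) : ℝ := 2 * W * sinc (2 * π * W * x)

theorem prolateCoeff_zero (W : ℝ) : prolateCoeff W 0 = 2 * W := by
  simp [prolateCoeff]

theorem prolateCoeff_neg (W x : ℝ) : prolateCoeff W (-x) = prolateCoeff W x := by
  simp [prolateCoeff, sinc_neg]

theorem prolateCoeff_of_ne_zero (W : ℝ) {x : ℝ} (hx : x ≠ 0) :
    prolateCoeff W x = sin (2 * π * W * x) / (π * x) := by
  rcases eq_or_ne W 0 with rfl | hW
  · simp [prolateCoeff]
  · rw [prolateCoeff, sinc_of_ne_zero (by positivity)]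
    field_simp

theorem prolateMatrix_apply (N : ℕ) (W : ℝ) (m n : Fin N) :
    prolateMatrix N W m n = prolateCoeff W (m - n) := by
  rw [prolateMatrix]
  split_ifs with h
  · simp [h, prolateCoeff_zero]
  · rw [prolateCoeff_of_ne_zero W (sub_ne_zero.mpr (by exact_mod_cast h))]

theorem prolateCoeff_sq_le (W : ℝ) {x : ℝ} (hx : x ≠ 0) :
    prolateCoeff W x ^ 2 ≤ ((π * x) ^ 2)⁻¹ := by
  rw [prolateCoeff_of_ne_zero W hx, div_pow, div_eq_mul_inv]
  exact mul_le_of_le_one_left (by positivity) (sin_sq_le_one _)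

/-- Parseval's identity `∑_{k ∈ ℤ} b_k² = 2W` for `b_k = prolateCoeff W k`, folded using `b_0 = 2W`
and `b_{-k} = b_k`. It comes from the Fourier series of the Bernoulli polynomial `B₂` through
`sin² y = (1 - cos 2y) / 2`. -/
theorem hasSum_prolateCoeff_sq {W : ℝ} (hW : W ∈ Set.Icc (0 : ℝ) (1 / 2)) :
    HasSum (fun k : ℕ => prolateCoeff W (k + 1) ^ 2) (W * (1 - 2 * W)) := by
  have hx : 2 * W ∈ Set.Icc (0 : ℝ) 1 := ⟨by linarith [hW.1], by linarith [hW.2]⟩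
  have hcos := hasSum_one_div_nat_pow_mul_cos one_ne_zero hx
  rw [← bernoulliFun] at hcos
  norm_num [bernoulliFun_two, Nat.factorial] at hcos
  have hsin := (hasSum_zeta_two.sub hcos).mul_left (2 * π ^ 2)⁻¹
  rw [show (2 * π ^ 2)⁻¹ * (π ^ 2 / 6 - (2 * π) ^ 2 / 2 / 2 * ((2 * W) ^ 2 - 2 * W + 1 / 6)) =
    W * (1 - 2 * W) by field_simp; ring, ← hasSum_nat_add_iff' 1] at hsin
  norm_num at hsin
  refine hsin.congr_fun fun k => ?_
  rw [prolateCoeff_of_ne_zero W (by positivity), div_pow, sin_sq_eq_half_sub]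
  field_simp

/-- `prolateTail W j = ∑_{k > j} prolateCoeff W k ^ 2`. -/
def prolateTail (W : ℝ) (j : ℕ) : ℝ := ∑' k : ℕ, prolateCoeff W ((k + j : ℕ) + 1) ^ 2

theorem prolateTail_nonneg (W : ℝ) (j : ℕ) : 0 ≤ prolateTail W j :=
  tsum_nonneg fun _ => sq_nonneg _

theorem sum_range_add_prolateTail {W : ℝ} (hW : W ∈ Set.Icc (0 : ℝ) (1 / 2)) (j : ℕ) :
    ∑ k ∈ range j, prolateCoeff W (k + 1) ^ 2 + prolateTail W j = W * (1 - 2 * W) := by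
  rw [prolateTail, (hasSum_prolateCoeff_sq hW).summable.sum_add_tsum_nat_add,
    (hasSum_prolateCoeff_sq hW).tsum_eq]

theorem prolateTail_le (W : ℝ) (j : ℕ) : prolateTail W j ≤ 2 / (π ^ 2 * (j + 1)) := by
  refine tsum_le_of_sum_range_le (fun _ => sq_nonneg _) fun M => ?_
  calc ∑ k ∈ range M, prolateCoeff W ((k + j : ℕ) + 1) ^ 2
      ≤ ∑ k ∈ range M, (π ^ 2)⁻¹ * ((((j + 1 + k : ℕ) : ℝ)) ^ 2)⁻¹ :=
        sum_le_sum fun k _ => (prolateCoeff_sq_le W (by positivity)).trans_eq (by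
          rw [mul_pow, mul_inv]
          push_cast
          ring_nf)
    _ = (π ^ 2)⁻¹ * ∑ i ∈ Ioo j (j + 1 + M), ((i : ℝ) ^ 2)⁻¹ := by
        rw [← mul_sum, ← Ico_add_one_left_eq_Ioo, sum_Ico_eq_sum_range, Nat.add_sub_cancel_left]
    _ ≤ (π ^ 2)⁻¹ * (2 / (j + 1)) := by
        gcongr
        exact sum_Ioo_inv_sq_le _ _
    _ = 2 / (π ^ 2 * (j + 1)) := by
        field_simp

theorem sum_sq_prolateMatrix_row {W : ℝ} (hW : W ∈ Set.Icc (0 : ℝ) (1 / 2)) {N : ℕ}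
    (m : Fin N) :
    ∑ n, prolateMatrix N W m n ^ 2 = 2 * W - prolateTail W m - prolateTail W (N - 1 - m) := by
  have hrow := sum_range_comp_natCast_sub (fun x => prolateCoeff W x ^ 2) m.isLt
  simp only [prolateCoeff_neg, prolateCoeff_zero] at hrow
  simp only [prolateMatrix_apply]
  rw [Fin.sum_univ_eq_sum_range (fun n => prolateCoeff W (m - n) ^ 2), hrow]
  linarith [sum_range_add_prolateTail hW m, sum_range_add_prolateTail hW (N - 1 - m)]

theorem two_mul_sub_sum_sq_eigenvalues_prolateMatrix {W : ℝ}
    (hW : W ∈ Set.Icc (0 : ℝ) (1 / 2)) {N : ℕ} (hB : (prolateMatrix N W).IsHermitian) :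
    2 * N * W - ∑ ℓ, hB.eigenvalues ℓ ^ 2 = 2 * ∑ m ∈ range N, prolateTail W m := by
  simp only [hB.sum_eigenvalues_sq, Real.norm_eq_abs, sq_abs, sum_sq_prolateMatrix_row hW]
  rw [Fin.sum_univ_eq_sum_range (fun m => 2 * W - prolateTail W m - prolateTail W (N - 1 - m)),
    sum_sub_distrib, sum_sub_distrib, sum_range_reflect (prolateTail W), sum_const, card_range,
    nsmul_eq_mul]
  ring

theorem two_mul_sum_range_prolateTail_le (W : ℝ) (N : ℕ) :
    2 * ∑ m ∈ range N, prolateTail W m ≤ 1 + log N := by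
  have hπ : 4 / π ^ 2 ≤ 1 := (div_le_one (by positivity)).mpr (by nlinarith [pi_gt_three])
  have hH : (0 : ℝ) ≤ harmonic N := by
    rw [harmonic]
    push_cast
    positivity
  calc 2 * ∑ m ∈ range N, prolateTail W m
      ≤ 2 * ∑ m ∈ range N, 2 / (π ^ 2 * ((m : ℝ) + 1)) := by
        gcongr with m
        exact prolateTail_le W m
    _ = 4 / π ^ 2 * harmonic N := by
        rw [harmonic]
        push_cast
        rw [mul_sum, mul_sum]
        refine sum_congr rfl fun m _ => ?_
        field_simp
        ring
    _ ≤ harmonic N := mul_le_of_le_one_left hH hπ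
    _ ≤ 1 + log N := harmonic_le_one_add_log N

theorem le_div_log_two_mul_log {c x : ℝ} (hc : 0 ≤ c) (hx : 2 ≤ x) : c ≤ c / log 2 * log x := by
  rw [div_mul_eq_mul_div, le_div_iff₀ (log_pos one_lt_two)]
  exact mul_le_mul_of_nonneg_left (log_le_log two_pos hx) hc

/-- For fixed `W ∈ (0, 1/2)` there is a constant `C` (depending only on `W`)
such that for all `N` with `2NW ≥ 2`:
`0 ≤ 2NW − Σ_{ℓ=0}^{N−1} λ_ℓ(B_{N,W})² ≤ C·log(2NW)`, i.e.
`Σ_ℓ λ_ℓ(B_{N,W})² = 2NW − O(log(2NW))`. -/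
theorem prolate_sum_sq_eigenvalues (W : ℝ) (hW : W ∈ Set.Ioo (0:ℝ) (1/2))
    (hH : ∀ N : ℕ, (prolateMatrix N W).IsHermitian) :
    ∃ C : ℝ, 0 < C ∧ ∀ N : ℕ, 2 ≤ 2 * (N : ℝ) * W →
      0 ≤ 2 * (N : ℝ) * W - ∑ ℓ : Fin N, ((hH N).eigenvalues ℓ) ^ 2
      ∧ 2 * (N : ℝ) * W - ∑ ℓ : Fin N, ((hH N).eigenvalues ℓ) ^ 2
          ≤ C * Real.log (2 * (N : ℝ) * W) := by
  obtain ⟨hW0, hW1⟩ := hW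
  set c := 1 - log (2 * W)
  have hc : 0 ≤ c := by linarith [log_nonpos (by linarith : 0 ≤ 2 * W) (by linarith)]
  refine ⟨1 + c / log 2, by positivity, fun N hN => ?_⟩
  rw [two_mul_sub_sum_sq_eigenvalues_prolateMatrix ⟨hW0.le, hW1.le⟩ (hH N)]
  refine ⟨mul_nonneg zero_le_two (sum_nonneg fun m _ => prolateTail_nonneg W m), ?_⟩
  have hN0 : (0 : ℝ) < N := by nlinarith
  calc 2 * ∑ m ∈ range N, prolateTail W m
      ≤ 1 + log N := two_mul_sum_range_prolateTail_le W N
    _ = c + log (2 * N * W) := by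
        rw [show 2 * (N : ℝ) * W = 2 * W * N by ring, log_mul (by positivity) hN0.ne']
        ring
    _ ≤ (1 + c / log 2) * log (2 * N * W) := by
        linarith [le_div_log_two_mul_log hc hN]
end
end

section
/- For N ∈ ℕ and W ∈ (0, 1/2), let O^{(2)}_{N,W} := B_{N,W} ⊗ B_{N,W} be the N² × N² matrix indexed by pairs (n_1, n_2), (m_1, m_2) ∈ {0, …, N−1}² with entries ( sin(2πW(m_1−n_1)) / (π(m_1−n_1)) )·( sin(2πW(m_2−n_2)) / (π(m_2−n_2)) ) (each factor equal to 2W when its index difference is 0); this is the time-frequency limiting operator on ℤ² with time set {0,…,N−1}² and frequency band [−W,W]². Then Σ_ℓ λ_ℓ(O^{(2)}_{N,W}) = 4N²W², and for fixed W there exists a constant C (depending only on W) such that for all sufficiently large N: 0 ≤ 4N²W² − Σ_ℓ λ_ℓ(O^{(2)}_{N,W})² ≤ C·NW·log(NW). (That is, Σ_ℓ λ_ℓ(O^{(2)}_{N,W})² = 4N²W² − O(NW log(NW)).) -/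
/-!
The eigenvalues of `B ⊗ B` are the products `λᵢ λⱼ`, so `Σ λ = (tr B)² = (2NW)²` and
`Σ λ² = tr ((B ⊗ B)²) = (tr B²)²`. Now `t = tr B² = Σ_{m,n} B[m,n]²`, and row `m` of `B` is a
window of the sequence `sin (2πWk) / (πk)`, whose squares sum to `2W` over `ℤ`. The squares
missed by the window are at distance more than `m` resp. `N - 1 - m` from the diagonal, so they
contribute `O (1 / (m + 1) + 1 / (N - m))`, whence `0 ≤ 2NW - t = O (log N)`. Finally
`0 ≤ (2NW)² - t² ≤ 4NW (2NW - t)`.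
-/

set_option autoImplicit false

open Real Kronecker

noncomputable section

/-- The two-dimensional time-frequency limiting operator `O⁽²⁾_{N,W} = B_{N,W} ⊗ B_{N,W}`
on `ℤ²` with time set `{0,…,N−1}²` and frequency band `[−W,W]²`. -/
def prolateMatrix2D (N : ℕ) (W : ℝ) : Matrix (Fin N × Fin N) (Fin N × Fin N) ℝ :=
  (prolateMatrix N W) ⊗ₖ (prolateMatrix N W)

/-- At `x = 0` this is `0`, not the limit `4 W ^ 2`. -/
def sincSq (W x : ℝ) : ℝ := sin (2 * π * W * x) ^ 2 / (π * x) ^ 2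

lemma sincSq_zero (W : ℝ) : sincSq W 0 = 0 := by simp [sincSq]

lemma sincSq_even (W : ℝ) : (sincSq W).Even := fun x => by
  simp [sincSq]

lemma sincSq_nonneg (W x : ℝ) : 0 ≤ sincSq W x := by unfold sincSq; positivity

lemma sincSq_le (W x : ℝ) : sincSq W x ≤ 1 / (π * x) ^ 2 :=
  div_le_div_of_nonneg_right (sin_sq_le_one _) (sq_nonneg _)

/-- `sin² = (1 - cos) / 2` turns the series into `ζ(2)` minus the cosine Fourier series of the
Bernoulli polynomial `B₂`. -/
lemma hasSum_sincSq {W : ℝ} (h₀ : 0 ≤ W) (h₁ : W ≤ 1 / 2) :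
    HasSum (fun k : ℕ => sincSq W k) (W - 2 * W ^ 2) := by
  have hcos := hasSum_one_div_nat_pow_mul_cos one_ne_zero
    (show 2 * W ∈ Set.Icc (0 : ℝ) 1 from ⟨by linarith, by linarith⟩)
  have hdiff := (hasSum_zeta_two.sub hcos).div_const (2 * π ^ 2)
  have hterm : ∀ k : ℕ, sincSq W k =
      (1 / (k : ℝ) ^ 2 - 1 / (k : ℝ) ^ (2 * 1) * cos (2 * π * k * (2 * W))) / (2 * π ^ 2) := by
    intro k
    rw [sincSq, sin_sq_eq_half_sub]
    ring_nf
  have hval : W - 2 * W ^ 2 = (π ^ 2 / 6 - (-1) ^ (1 + 1) * (2 * π) ^ (2 * 1) / 2 /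
      (2 * 1).factorial * bernoulliFun 2 (2 * W)) / (2 * π ^ 2) := by
    rw [bernoulliFun_two]
    field_simp
    norm_num
    ring
  rw [funext hterm, hval]
  exact hdiff

lemma sub_sum_range_sincSq_le {W : ℝ} (h₀ : 0 ≤ W) (h₁ : W ≤ 1 / 2) (j : ℕ) :
    W - 2 * W ^ 2 - ∑ k ∈ Finset.range (j + 1), sincSq W k ≤ 2 / (π ^ 2 * (j + 1)) := by
  have htail := (hasSum_nat_add_iff' (j + 1)).mpr (hasSum_sincSq h₀ h₁)
  rw [← htail.tsum_eq]
  refine Real.tsum_le_of_sum_range_le (fun _ => sincSq_nonneg _ _) fun n => ?_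
  calc ∑ i ∈ Finset.range n, sincSq W ↑(i + (j + 1))
      = ∑ k ∈ Finset.Ioo j (j + 1 + n), sincSq W k := by
        rw [← Finset.Ico_add_one_left_eq_Ioo, Finset.sum_Ico_eq_sum_range]
        simp [add_comm]
    _ ≤ ∑ k ∈ Finset.Ioo j (j + 1 + n), ((k : ℝ) ^ 2)⁻¹ / π ^ 2 :=
        Finset.sum_le_sum fun k _ => (sincSq_le W k).trans_eq (by ring)
    _ ≤ 2 / (j + 1) / π ^ 2 := by
        rw [← Finset.sum_div]
        gcongr
        exact sum_Ioo_inv_sq_le j _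
    _ = 2 / (π ^ 2 * (j + 1)) := by rw [div_div, mul_comm]

lemma sum_range_sincSq_le {W : ℝ} (h₀ : 0 ≤ W) (h₁ : W ≤ 1 / 2) (j : ℕ) :
    ∑ k ∈ Finset.range j, sincSq W k ≤ W - 2 * W ^ 2 :=
  sum_le_hasSum _ (fun k _ => sincSq_nonneg W k) (hasSum_sincSq h₀ h₁)

open Finset in
lemma sum_range_natCast_sub {M : Type*} [AddCommMonoid M] {f : ℝ → M} (h₀ : f 0 = 0) (N : ℕ) :
    ∑ n ∈ range N, f ((N : ℝ) - n) = ∑ k ∈ range (N + 1), f k := by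
  rw [sum_range_succ', Nat.cast_zero, h₀, add_zero, ← sum_range_reflect]
  refine sum_congr rfl fun n hn => congrArg f ?_
  rw [mem_range] at hn
  rw [Nat.sub_sub, Nat.cast_sub (by omega : 1 + n ≤ N)]
  push_cast
  ring

open Finset in
lemma sum_range_sum_range_natCast_sub {M : Type*} [AddCommMonoid M] {f : ℝ → M} (hf : f.Even)
    (h₀ : f 0 = 0) (N : ℕ) :
    ∑ m ∈ range N, ∑ n ∈ range N, f ((m : ℝ) - n)
      = 2 • ∑ n ∈ range N, ∑ k ∈ range (n + 1), f k := by
  induction N with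
  | zero => simp
  | succ N ih =>
    have hsymm : ∑ m ∈ range N, f ((m : ℝ) - N) = ∑ n ∈ range N, f ((N : ℝ) - n) :=
      sum_congr rfl fun m _ => by rw [← hf, neg_sub]
    simp only [sum_range_succ _ N, sum_add_distrib, ih, hsymm, sub_self, h₀, add_zero,
      sum_range_natCast_sub h₀, smul_add, two_nsmul]
    abel

lemma Matrix.IsHermitian.trace_mul_self_eq_sum_sq_eigenvalues {𝕜 n : Type*} [RCLike 𝕜]
    [Fintype n] [DecidableEq n] {A : Matrix n n 𝕜} (hA : A.IsHermitian) :
    (A * A).trace = ∑ i, (hA.eigenvalues i : 𝕜) ^ 2 := by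
  have htrace_conj : ∀ M,
      (Unitary.conjStarAlgAut 𝕜 _ hA.eigenvectorUnitary M).trace = M.trace := fun M => by
    rw [Unitary.conjStarAlgAut_apply, Matrix.trace_mul_cycle, Unitary.coe_star_mul_self,
      Matrix.one_mul]
  conv_lhs => rw [hA.spectral_theorem, ← map_mul, htrace_conj]
  simp [Matrix.trace_diagonal, sq]

section

variable (N : ℕ) (W : ℝ)

lemma prolateMatrix_apply_comm (m n : Fin N) : prolateMatrix N W n m = prolateMatrix N W m n := by
  by_cases h : m = n
  · rw [h]
  · simp only [prolateMatrix, Fin.val_inj, h, Ne.symm h, if_false]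
    rw [← neg_sub, mul_neg, sin_neg, mul_neg, neg_div_neg_eq]

lemma prolateMatrix_apply_sq (m n : Fin N) :
    prolateMatrix N W m n ^ 2 = (if m = n then 4 * W ^ 2 else 0) + sincSq W ((m : ℝ) - n) := by
  by_cases h : m = n
  · simp only [prolateMatrix, h, if_true, sub_self, sincSq_zero, add_zero]
    ring
  · simp [prolateMatrix, Fin.val_inj, h, sincSq, div_pow]

lemma trace_prolateMatrix : (prolateMatrix N W).trace = 2 * N * W := by
  simp only [Matrix.trace, Matrix.diag_apply, prolateMatrix, if_true, Finset.sum_const,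
    Finset.card_univ, Fintype.card_fin, nsmul_eq_mul]
  ring

lemma trace_prolateMatrix_mul_self :
    (prolateMatrix N W * prolateMatrix N W).trace
      = 4 * N * W ^ 2 + 2 * ∑ n ∈ Finset.range N, ∑ k ∈ Finset.range (n + 1), sincSq W k := by
  have hoff := sum_range_sum_range_natCast_sub (f := sincSq W) (sincSq_even W) (sincSq_zero W) N
  conv at hoff => lhs; simp only [Finset.sum_range]
  have hsq : ∀ m n : Fin N, prolateMatrix N W m n * prolateMatrix N W n m
      = prolateMatrix N W m n ^ 2 := fun m n => by rw [prolateMatrix_apply_comm, sq]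
  simp only [Matrix.trace, Matrix.diag, Matrix.mul_apply, hsq, prolateMatrix_apply_sq,
    Finset.sum_add_distrib, hoff]
  simp only [Finset.sum_ite_eq, Finset.mem_univ, if_true, Finset.sum_const, Finset.card_univ,
    Fintype.card_fin, nsmul_eq_mul]
  ring

lemma trace_prolateMatrix_mul_self_nonneg :
    0 ≤ (prolateMatrix N W * prolateMatrix N W).trace := by
  rw [trace_prolateMatrix_mul_self]
  have := Finset.sum_nonneg fun n (_ : n ∈ Finset.range N) =>
    Finset.sum_nonneg fun k (_ : k ∈ Finset.range (n + 1)) => sincSq_nonneg W k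
  positivity

end

section

variable (N : ℕ) {W : ℝ}

lemma two_mul_sub_trace_prolateMatrix_mul_self :
    2 * N * W - (prolateMatrix N W * prolateMatrix N W).trace
      = 2 * ∑ n ∈ Finset.range N, (W - 2 * W ^ 2 - ∑ k ∈ Finset.range (n + 1), sincSq W k) := by
  rw [trace_prolateMatrix_mul_self, Finset.sum_sub_distrib, Finset.sum_const, Finset.card_range,
    nsmul_eq_mul]
  ring

variable (h₀ : 0 ≤ W) (h₁ : W ≤ 1 / 2)
include h₀ h₁

lemma trace_prolateMatrix_mul_self_le :
    (prolateMatrix N W * prolateMatrix N W).trace ≤ 2 * N * W := by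
  have hgap := two_mul_sub_trace_prolateMatrix_mul_self N (W := W)
  have hterms : 0 ≤ ∑ n ∈ Finset.range N, (W - 2 * W ^ 2 - ∑ k ∈ Finset.range (n + 1), sincSq W k) :=
    Finset.sum_nonneg fun n _ => sub_nonneg.mpr (sum_range_sincSq_le h₀ h₁ _)
  linarith

lemma two_mul_sub_trace_prolateMatrix_mul_self_le :
    2 * N * W - (prolateMatrix N W * prolateMatrix N W).trace ≤ 4 / π ^ 2 * (1 + log N) := by
  rw [two_mul_sub_trace_prolateMatrix_mul_self]
  calc 2 * ∑ n ∈ Finset.range N, (W - 2 * W ^ 2 - ∑ k ∈ Finset.range (n + 1), sincSq W k)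
      ≤ 2 * ∑ n ∈ Finset.range N, 2 / (π ^ 2 * (n + 1)) := by
        gcongr with n
        exact sub_sum_range_sincSq_le h₀ h₁ n
    _ = 4 / π ^ 2 * harmonic N := by
        rw [harmonic, Rat.cast_sum, Finset.mul_sum, Finset.mul_sum]
        refine Finset.sum_congr rfl fun n _ => ?_
        push_cast
        field_simp
        ring
    _ ≤ 4 / π ^ 2 * (1 + log N) := by
        gcongr
        exact harmonic_le_one_add_log N

end

lemma one_add_log_le_mul_log {x W : ℝ} (hW₀ : 0 < W) (hW₁ : W ≤ 1) (hx : exp 1 ≤ x * W) :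
    1 + log x ≤ (2 - log W) * log (x * W) := by
  have hxW : 0 < x * W := (exp_pos 1).trans_le hx
  have hL : 1 ≤ log (x * W) := (le_log_iff_exp_le hxW).mpr hx
  have hlogW : log W ≤ 0 := log_nonpos hW₀.le hW₁
  rw [log_mul (pos_of_mul_pos_left hxW hW₀.le).ne' hW₀.ne'] at hL ⊢
  nlinarith

lemma trace_prolateMatrix2D (N : ℕ) (W : ℝ) :
    (prolateMatrix2D N W).trace = 4 * N ^ 2 * W ^ 2 := by
  rw [prolateMatrix2D, Matrix.trace_kronecker, trace_prolateMatrix]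
  ring

lemma trace_prolateMatrix2D_mul_self (N : ℕ) (W : ℝ) :
    (prolateMatrix2D N W * prolateMatrix2D N W).trace
      = (prolateMatrix N W * prolateMatrix N W).trace ^ 2 := by
  rw [prolateMatrix2D, ← Matrix.mul_kronecker_mul, Matrix.trace_kronecker, sq]

/-- `Σ_ℓ λ_ℓ(O⁽²⁾_{N,W}) = 4N²W²`, and for fixed `W ∈ (0,1/2)` there are a
constant `C` (depending only on `W`) and `N₀` such that for all `N ≥ N₀`:
`0 ≤ 4N²W² − Σ_ℓ λ_ℓ(O⁽²⁾_{N,W})² ≤ C·NW·log(NW)`, i.e.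
`Σ_ℓ λ_ℓ(O⁽²⁾_{N,W})² = 4N²W² − O(NW·log(NW))`. -/
theorem prolate2D_sum_sq_eigenvalues (W : ℝ) (hW : W ∈ Set.Ioo (0:ℝ) (1/2))
    (hH : ∀ N : ℕ, (prolateMatrix2D N W).IsHermitian) :
    (∀ N : ℕ, ∑ ℓ : Fin N × Fin N, (hH N).eigenvalues ℓ = 4 * (N : ℝ) ^ 2 * W ^ 2)
    ∧ ∃ C : ℝ, 0 < C ∧ ∃ N₀ : ℕ, ∀ N : ℕ, N₀ ≤ N →
        0 ≤ 4 * (N : ℝ) ^ 2 * W ^ 2 - ∑ ℓ : Fin N × Fin N, ((hH N).eigenvalues ℓ) ^ 2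
        ∧ 4 * (N : ℝ) ^ 2 * W ^ 2 - ∑ ℓ : Fin N × Fin N, ((hH N).eigenvalues ℓ) ^ 2
            ≤ C * ((N : ℝ) * W) * Real.log ((N : ℝ) * W) := by
  obtain ⟨hW₀, hW₁⟩ := hW
  refine ⟨fun N => ?_, 16 / π ^ 2 * (2 - log W), ?_, ⌈exp 1 / W⌉₊, fun N hN => ?_⟩
  · have htr := (hH N).trace_eq_sum_eigenvalues
    simp only [RCLike.ofReal_real_eq_id, id] at htr
    rw [← htr, trace_prolateMatrix2D]
  · exact mul_pos (by positivity) (by linarith [log_neg hW₀ (by linarith)])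
  have hsq := (hH N).trace_mul_self_eq_sum_sq_eigenvalues
  simp only [RCLike.ofReal_real_eq_id, id, trace_prolateMatrix2D_mul_self] at hsq
  rw [← hsq]
  set t := (prolateMatrix N W * prolateMatrix N W).trace
  have hNW : exp 1 ≤ N * W :=
    (div_le_iff₀ hW₀).mp ((Nat.le_ceil _).trans (Nat.cast_le.mpr hN))
  have ht₀ : 0 ≤ t := trace_prolateMatrix_mul_self_nonneg N W
  have ht : t ≤ 2 * N * W := trace_prolateMatrix_mul_self_le N hW₀.le hW₁.le
  have hgap : 2 * N * W - t ≤ 4 / π ^ 2 * ((2 - log W) * log (N * W)) :=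
    (two_mul_sub_trace_prolateMatrix_mul_self_le N hW₀.le hW₁.le).trans <| by
      gcongr
      exact one_add_log_le_mul_log hW₀ (by linarith) hNW
  constructor
  · nlinarith
  · calc 4 * (N : ℝ) ^ 2 * W ^ 2 - t ^ 2 = (2 * N * W - t) * (2 * N * W + t) := by ring
      _ ≤ 4 / π ^ 2 * ((2 - log W) * log (N * W)) * (4 * (N * W)) :=
          mul_le_mul hgap (by linarith) (by linarith) (by linarith)
      _ = 16 / π ^ 2 * (2 - log W) * (N * W) * log (N * W) := by ring
end
end
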